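/- arXiv:1905.13306 — 3 statements merged into one kernel-verified Lean document; each statement's English description precedes it below -/
import Mathlib

section
/- (Lemma 3.3, non-injectivity in the limit) Fix k ≥ 1, a nonempty proper subset S of the index set {0,…,k−1}, and two distinct constants c ≠ d ∈ ℝ. For z ∈ ℝ let v(z) ∈ ℝ^k equal c on S and z off S, and let w(z) ∈ ℝ^k equal d on S and z off S. Then lim_{z→−∞} σ(v(z)) = lim_{z→−∞} σ(w(z)), even though v(z) ≠ w(z) for every z; both limits equal the vector that is 1/|S| on S and 0 off S. -/
/-- Softmax: `σ(v)_i = exp(v_i) / Σ_j exp(v_j)`. -/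
noncomputable def softmax {k : ℕ} (v : Fin k → ℝ) : Fin k → ℝ :=
  fun i => Real.exp (v i) / ∑ j, Real.exp (v j)

lemma softmax_aux {k : ℕ} (S : Finset (Fin k)) (hS : S.Nonempty) (c : ℝ) :
    Filter.Tendsto (fun z : ℝ => softmax (fun i => if i ∈ S then c else z))
      Filter.atBot
      (nhds (fun i : Fin k => if i ∈ S then 1 / (S.card : ℝ) else 0)) := by
  have hsum : ∀ z : ℝ, (∑ j : Fin k, Real.exp (if j ∈ S then c else z)) =
      S.card * Real.exp c + Sᶜ.card * Real.exp z := by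
    intro z
    rw [← Finset.sum_add_sum_compl S]
    congr 1
    · rw [Finset.sum_congr rfl (fun j hj => by rw [if_pos hj]),
        Finset.sum_const, nsmul_eq_mul]
    · rw [Finset.sum_congr rfl (fun j hj => by
        rw [if_neg (Finset.mem_compl.mp hj)]), Finset.sum_const, nsmul_eq_mul]
  rw [tendsto_pi_nhds]
  intro i
  have hden : Filter.Tendsto (fun z : ℝ => (S.card : ℝ) * Real.exp c + Sᶜ.card * Real.exp z)
      Filter.atBot (nhds ((S.card : ℝ) * Real.exp c)) := by
    have := (Real.tendsto_exp_atBot.const_mul (Sᶜ.card : ℝ)).const_add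
      ((S.card : ℝ) * Real.exp c)
    simpa using this
  have hcard : (0:ℝ) < S.card := by exact_mod_cast Finset.card_pos.mpr hS
  have hdne : (S.card : ℝ) * Real.exp c ≠ 0 :=
    ne_of_gt (mul_pos hcard (Real.exp_pos c))
  by_cases hi : i ∈ S
  · have : ∀ z : ℝ, softmax (fun j => if j ∈ S then c else z) i =
        Real.exp c / ((S.card : ℝ) * Real.exp c + Sᶜ.card * Real.exp z) := by
      intro z; simp only [softmax, if_pos hi, hsum]
    simp only [this, if_pos hi]
    have : Filter.Tendsto (fun z : ℝ => Real.exp c / ((S.card : ℝ) * Real.exp c + Sᶜ.card * Real.exp z))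
        Filter.atBot (nhds (Real.exp c / ((S.card : ℝ) * Real.exp c))) :=
      (tendsto_const_nhds (x := Real.exp c) (f := Filter.atBot (α := ℝ))).div hden hdne
    convert this using 2
    rw [mul_comm, ← div_div, div_self (Real.exp_pos c).ne']
  · have : ∀ z : ℝ, softmax (fun j => if j ∈ S then c else z) i =
        Real.exp z / ((S.card : ℝ) * Real.exp c + Sᶜ.card * Real.exp z) := by
      intro z; simp only [softmax, if_neg hi, hsum]
    simp only [this, if_neg hi]
    simpa using (show Filter.Tendsto (fun z : ℝ => Real.exp z / ((S.card : ℝ) * Real.exp c + Sᶜ.card * Real.exp z))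
        Filter.atBot (nhds (0 / ((S.card : ℝ) * Real.exp c))) from Real.tendsto_exp_atBot.div hden hdne)

/-- (Lemma 3.3, non-injectivity in the limit) For a nonempty proper subset `S` of the
indices and distinct constants `c ≠ d`, letting `v(z)` be `c` on `S`, `z` off `S`, and
`w(z)` be `d` on `S`, `z` off `S`: `v(z) ≠ w(z)` for every `z`, yet `σ(v(z))` and
`σ(w(z))` have the same limit as `z → −∞`, namely `1/|S|` on `S` and `0` off `S`. -/
theorem softmax_limit_not_injective {k : ℕ} (hk : 1 ≤ k) (S : Finset (Fin k))
    (hS : S.Nonempty) (hSproper : S ≠ Finset.univ) (c d : ℝ) (hcd : c ≠ d) :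
    (∀ z : ℝ, (fun i : Fin k => if i ∈ S then c else z) ≠
              (fun i : Fin k => if i ∈ S then d else z)) ∧
    Filter.Tendsto (fun z : ℝ => softmax (fun i => if i ∈ S then c else z))
      Filter.atBot
      (nhds (fun i : Fin k => if i ∈ S then 1 / (S.card : ℝ) else 0)) ∧
    Filter.Tendsto (fun z : ℝ => softmax (fun i => if i ∈ S then d else z))
      Filter.atBot
      (nhds (fun i : Fin k => if i ∈ S then 1 / (S.card : ℝ) else 0)) := by
  refine ⟨?_, softmax_aux S hS c, softmax_aux S hS d⟩
  intro z h
  obtain ⟨i, hi⟩ := hS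
  have := congrFun h i
  simp only [if_pos hi] at this
  exact hcd this
end

section
/- (Corrected quantitative form of Theorem 3.4) For every n ≥ 1 and every v ∈ ℝ^n, the maximum over all components of the implicit-background composite vector satisfies max( max_i v_i , −logsumexp(v) ) ≥ −(1/2)·log n. In particular, for n = 1 this maximum is always ≥ 0. -/
/-!
With `M = max_i v_i`, every `exp (v i)` is at most `exp M`, so `logsumexp v ≤ log n + M`.
Hence `M + (-logsumexp v) ≥ -log n`, and the larger of the two is at least half of that.
-/

noncomputable def logsumexp {n : ℕ} (v : Fin n → ℝ) : ℝ :=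
  Real.log (∑ j, Real.exp (v j))

open Finset Real

theorem Finset.log_sum_exp_le_log_card_add_sup' {ι : Type*} (s : Finset ι) (hs : s.Nonempty)
    (f : ι → ℝ) : log (∑ i ∈ s, exp (f i)) ≤ log #s + s.sup' hs f := by
  have hcard : (0 : ℝ) < #s := by exact_mod_cast hs.card_pos
  calc log (∑ i ∈ s, exp (f i)) ≤ log (#s * exp (s.sup' hs f)) := by
        refine log_le_log (sum_pos (fun i _ => exp_pos _) hs) ?_
        simpa using s.sum_le_card_nsmul _ _ fun i hi => exp_le_exp.2 (s.le_sup' f hi)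
    _ = log #s + s.sup' hs f := by rw [log_mul hcard.ne' (exp_ne_zero _), log_exp]

theorem logsumexp_le_log_add_sup' {n : ℕ} (v : Fin n → ℝ) (h : (univ : Finset (Fin n)).Nonempty) :
    logsumexp v ≤ log n + univ.sup' h v := by
  simpa [logsumexp] using univ.log_sum_exp_le_log_card_add_sup' h v

theorem le_max_neg_of_le_add {a b c : ℝ} (h : b ≤ c + a) : -(1 / 2) * c ≤ max a (-b) := by
  rcases le_total (-(1 / 2) * c) a with ha | ha
  · exact le_max_of_le_left ha
  · exact le_max_of_le_right (by linarith)

/-- (Corrected quantitative form of Theorem 3.4) For every `n ≥ 1` and `v ∈ ℝ^n`, the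
maximum component of the implicit-background composite vector satisfies
`max(max_i v_i, −logsumexp(v)) ≥ −(1/2)·log n`; in particular for `n = 1` it is `≥ 0`. -/
theorem impBG_max_lower_bound {n : ℕ} (hn : 1 ≤ n) (v : Fin n → ℝ) :
    max (Finset.univ.sup' ⟨⟨0, hn⟩, Finset.mem_univ _⟩ v) (-logsumexp v)
      ≥ -(1 / 2) * Real.log n ∧
    (n = 1 →
      max (Finset.univ.sup' ⟨⟨0, hn⟩, Finset.mem_univ _⟩ v) (-logsumexp v) ≥ 0) := by
  have key := le_max_neg_of_le_add (logsumexp_le_log_add_sup' v ⟨⟨0, hn⟩, mem_univ _⟩)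
  refine ⟨key, ?_⟩
  rintro rfl
  simpa using key
end

section
/- (Background predicted only on the negative orthant) Fix n ≥ 1 and v ∈ ℝ^n. If the implicit background component strictly dominates every in-distribution component, i.e., −logsumexp(v) > v_i for every index i, then every in-distribution component is strictly negative: v_i < 0 for all i. Hence under implicit background estimation the background class can be predicted only when all in-distribution logits lie in the negative orthant of ℝ^n. -/
theorem le_logsumexp {n : ℕ} (v : Fin n → ℝ) (i : Fin n) : v i ≤ logsumexp v :=
  calc v i = Real.log (Real.exp (v i)) := (Real.log_exp (v i)).symm
    _ ≤ logsumexp v := Real.log_le_log (Real.exp_pos _)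
      (Finset.single_le_sum (fun j _ => (Real.exp_pos (v j)).le) (Finset.mem_univ i))

-- `v i ≤ logsumexp v < -v i`.
theorem background_predicted_only_on_negative_orthant_general {n : ℕ}
    (v : Fin n → ℝ) (h : ∀ i, -logsumexp v > v i) : ∀ i, v i < 0 :=
  fun i => by linarith [h i, le_logsumexp v i]

/-- (Background predicted only on the negative orthant) If the implicit background
component strictly dominates every in-distribution component, i.e.
`−logsumexp(v) > v_i` for every `i`, then every in-distribution component is strictly
negative: `v_i < 0` for all `i`. -/
theorem background_predicted_only_on_negative_orthant {n : ℕ} (hn : 1 ≤ n)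
    (v : Fin n → ℝ) (h : ∀ i, -logsumexp v > v i) : ∀ i, v i < 0 :=
  background_predicted_only_on_negative_orthant_general v h
end
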